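/- With the setup of a cut \(C\) on \(\hat{Q}\) and the height increment \(h_C\) of paths (each arrow contributing \(1\) if not in \(C\), and \(-n\) if in \(C\)): any two directed paths \(p, q\) in \(\hat{Q}\) from a vertex \(x\) to a vertex \(y\) have the same height increment, \(h_C(p) = h_C(q)\). -/
import Mathlib


open scoped Classical

noncomputable section

/-- Vertices of the universal cover quiver: the lattice `L₀ = ℤⁿ`. -/
abbrev V (n : ℕ) := Fin n → ℤ

/-- The vectors `α₁, …, αₙ` (standard basis) and `α_{n+1} = -∑ αᵢ`. -/
def alphav (n : ℕ) (i : Fin (n + 1)) : V n :=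
  if h : (i : ℕ) < n then Pi.single ⟨i, h⟩ 1 else fun _ => -1

/-- An arrow of `Q̂` is a pair (source, type): the arrow `x → x + αᵢ`. -/
abbrev Arrow (n : ℕ) := V n × Fin (n + 1)

/-- The list of arrows of the path starting at `x` with list of types `l`. -/
def pathArrows (n : ℕ) : V n → List (Fin (n + 1)) → List (Arrow n)
  | _, [] => []
  | x, i :: l => (x, i) :: pathArrows n (x + alphav n i) l

/-- An elementary cycle: length `n+1`, pairwise distinct types, closed. -/
def IsElemCycle (n : ℕ) (l : List (Fin (n + 1))) : Prop :=
  l.length = n + 1 ∧ l.Nodup ∧ (l.map (alphav n)).sum = 0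

/-- A cut: every elementary cycle passes through exactly one arrow of `C`. -/
def IsCut (n : ℕ) (C : Set (Arrow n)) : Prop :=
  ∀ (x : V n) (l : List (Fin (n + 1))), IsElemCycle n l →
    ∃! a : Arrow n, a ∈ pathArrows n x l ∧ a ∈ C

/-- Height increment of a single arrow. -/
def hInc (n : ℕ) (C : Set (Arrow n)) (a : Arrow n) : ℤ :=
  if a ∈ C then -(n : ℤ) else 1

/-- Height increment along the path from `x` with types `l`. -/
def pathH (n : ℕ) (C : Set (Arrow n)) (x : V n) (l : List (Fin (n + 1))) : ℤ :=
  ((pathArrows n x l).map (hInc n C)).sum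

/-- A height function. -/
def IsHeight (n : ℕ) (h : V n → ℤ) : Prop :=
  h 0 = 0 ∧ ∀ (x : V n) (i : Fin (n + 1)),
    h (x + alphav n i) = h x + 1 ∨ h (x + alphav n i) = h x - n

/-- The cut associated to a height function. -/
def cutOf (n : ℕ) (h : V n → ℤ) : Set (Arrow n) :=
  {a | h (a.1 + alphav n a.2) = h a.1 - n}

/-- `L₁`-periodicity of a set of arrows. -/
def IsPeriodic (n : ℕ) (L1 : AddSubgroup (V n)) (C : Set (Arrow n)) : Prop :=
  ∀ a : Arrow n, ∀ y ∈ L1, (a ∈ C ↔ (a.1 + y, a.2) ∈ C)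

/-- The type of a periodic cut: the number of `L₁`-orbits of cut arrows of type `i`. -/
def typeCount (n : ℕ) (L1 : AddSubgroup (V n)) (C : Set (Arrow n)) (i : Fin (n + 1)) : ℕ :=
  Nat.card ((QuotientAddGroup.mk (s := L1)) '' {x : V n | (x, i) ∈ C})

end

section Aux
variable {n : ℕ} {C : Set (Arrow n)}

lemma pathH_nil (x : V n) : pathH n C x [] = 0 := rfl

lemma pathH_cons (x : V n) (i : Fin (n+1)) (l : List (Fin (n+1))) :
    pathH n C x (i :: l) = hInc n C (x, i) + pathH n C (x + alphav n i) l := by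
  simp [pathH, pathArrows]

lemma pathArrows_append (x : V n) (a b : List (Fin (n+1))) :
    pathArrows n x (a ++ b) = pathArrows n x a ++ pathArrows n (x + (a.map (alphav n)).sum) b := by
  induction a generalizing x with
  | nil => simp [pathArrows]
  | cons i a ih => simp [pathArrows, ih, add_assoc]

lemma pathH_append (x : V n) (a b : List (Fin (n+1))) :
    pathH n C x (a ++ b) = pathH n C x a + pathH n C (x + (a.map (alphav n)).sum) b := by
  simp [pathH, pathArrows_append]

lemma pathArrows_map_snd (x : V n) (l : List (Fin (n+1))) :
    (pathArrows n x l).map Prod.snd = l := by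
  induction l generalizing x with
  | nil => rfl
  | cons i l ih => simp [pathArrows, ih]

lemma sum_alphav (n : ℕ) : ∑ i : Fin (n+1), alphav n i = 0 := by
  rw [Fin.sum_univ_castSucc]
  have h1 : ∀ i : Fin n, alphav n i.castSucc = Pi.single i (1:ℤ) := by
    intro i
    simp [alphav, i.isLt]
  have h2 : alphav n (Fin.last n) = fun _ => (-1 : ℤ) := by
    simp [alphav]
  simp only [h1, h2]
  rw [Finset.univ_sum_single]
  funext j
  simp

lemma finRange_sum : ((List.finRange (n+1)).map (alphav n)).sum = 0 := by
  rw [← Fin.sum_univ_def]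
  exact sum_alphav n

lemma finRange_elemCycle : IsElemCycle n (List.finRange (n+1)) :=
  ⟨by simp, List.nodup_finRange _, finRange_sum⟩

lemma cycle_zero (hC : IsCut n C) (x : V n) (l : List (Fin (n+1)))
    (hl : IsElemCycle n l) : pathH n C x l = 0 := by
  obtain ⟨a₀, ⟨ha₀A, ha₀C⟩, huniq⟩ := hC x l hl
  set A := pathArrows n x l with hA
  have hsnd : A.map Prod.snd = l := pathArrows_map_snd x l
  have hlenA : A.length = n + 1 := by
    have := congrArg List.length hsnd
    simpa [hl.1] using this
  have hnd : A.Nodup := by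
    have : (A.map Prod.snd).Nodup := hsnd ▸ hl.2.1
    exact this.of_map
  have hmem : a₀ ∈ A.toFinset := List.mem_toFinset.mpr ha₀A
  have hsum : pathH n C x l = ∑ a ∈ A.toFinset, hInc n C a := by
    rw [pathH, ← hA, ← List.sum_toFinset _ hnd]
  rw [hsum]
  have hval : ∀ a ∈ A.toFinset, hInc n C a = if a = a₀ then -(n:ℤ) else 1 := by
    intro a ha
    by_cases h : a = a₀
    · simp [h, hInc, ha₀C]
    · have : a ∉ C := fun hc => h (huniq a ⟨List.mem_toFinset.mp ha, hc⟩)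
      simp [h, hInc, this]
  rw [Finset.sum_congr rfl hval, ← Finset.add_sum_erase _ _ hmem]
  have : ∀ a ∈ A.toFinset.erase a₀, (if a = a₀ then -(n:ℤ) else 1) = 1 := by
    intro a ha
    simp [Finset.ne_of_mem_erase ha]
  rw [Finset.sum_congr rfl this]
  simp only [if_pos rfl, Finset.sum_const, nsmul_eq_mul, mul_one]
  rw [Finset.card_erase_of_mem hmem, List.toFinset_card_of_nodup hnd, hlenA]
  push_cast
  ring

lemma swap2 (hC : IsCut n C) (x : V n) (i j : Fin (n+1)) :
    hInc n C (x, i) + hInc n C (x + alphav n i, j)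
      = hInc n C (x, j) + hInc n C (x + alphav n j, i) := by
  by_cases hij : i = j
  · subst hij; rfl
  · have hi : i ∈ List.finRange (n+1) := List.mem_finRange i
    set r := ((List.finRange (n+1)).erase i).erase j with hr
    have hj : j ∈ (List.finRange (n+1)).erase i :=
      (List.mem_erase_of_ne (Ne.symm hij)).mpr (List.mem_finRange j)
    have hperm : (List.finRange (n+1)).Perm (i :: j :: r) :=
      (List.perm_cons_erase hi).trans ((List.perm_cons_erase hj).cons i)
    have hperm2 : (List.finRange (n+1)).Perm (j :: i :: r) :=
      hperm.trans (List.Perm.swap j i r)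
    have hcyc : ∀ l, (List.finRange (n+1)).Perm l → IsElemCycle n l := by
      intro l hl
      refine ⟨by rw [← hl.length_eq, List.length_finRange], hl.nodup_iff.mp (List.nodup_finRange _), ?_⟩
      rw [← (hl.map (alphav n)).sum_eq]
      exact finRange_sum
    have h1 := cycle_zero hC x _ (hcyc _ hperm)
    have h2 := cycle_zero hC x _ (hcyc _ hperm2)
    rw [pathH_cons, pathH_cons] at h1 h2
    have hpt : x + alphav n j + alphav n i = x + alphav n i + alphav n j := by
      rw [add_right_comm]
    rw [hpt] at h2
    linarith

lemma pathH_perm (hC : IsCut n C) {p q : List (Fin (n+1))} (hpq : p.Perm q) :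
    ∀ x : V n, pathH n C x p = pathH n C x q := by
  induction hpq with
  | nil => intro x; rfl
  | cons a h ih => intro x; rw [pathH_cons, pathH_cons, ih]
  | swap a b l =>
    intro x
    rw [pathH_cons, pathH_cons, pathH_cons, pathH_cons]
    have hpt : x + alphav n b + alphav n a = x + alphav n a + alphav n b := by
      rw [add_right_comm]
    rw [hpt]
    have := swap2 hC x b a
    linarith
  | trans h1 h2 ih1 ih2 => intro x; exact (ih1 x).trans (ih2 x)



lemma sum_map_count (l : List (Fin (n+1))) :
    (l.map (alphav n)).sum = ∑ i : Fin (n+1), (l.count i : ℤ) • alphav n i := by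
  induction l with
  | nil => simp
  | cons a l ih =>
    simp only [List.map_cons, List.sum_cons, ih, List.count_cons]
    push_cast
    simp only [add_smul, Finset.sum_add_distrib, ite_smul, one_smul, zero_smul,
      beq_iff_eq]
    rw [Finset.sum_ite_eq Finset.univ a (alphav n)]
    simp [add_comm]

lemma d_const (d : Fin (n+1) → ℤ) (hd : ∑ i : Fin (n+1), d i • alphav n i = 0) :
    ∀ i, d i = d (Fin.last n) := by
  have h1 : ∀ i : Fin n, alphav n i.castSucc = Pi.single i (1:ℤ) := by
    intro i; simp [alphav, i.isLt]
  have h2 : alphav n (Fin.last n) = fun _ => (-1 : ℤ) := by simp [alphav]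
  have key : ∀ j : Fin n, d j.castSucc = d (Fin.last n) := by
    intro j
    have hj := congrFun hd j
    rw [Fin.sum_univ_castSucc] at hj
    simp only [Pi.add_apply, Finset.sum_apply, Pi.smul_apply, smul_eq_mul,
      h1, h2, Pi.zero_apply, Pi.single_apply] at hj
    rw [Finset.sum_congr rfl (fun i _ => by rw [mul_ite, mul_one, mul_zero]),
      Finset.sum_ite_eq Finset.univ j (fun i => d i.castSucc)] at hj
    simp at hj
    linarith
  intro i
  refine Fin.lastCases rfl key i

def rep (n : ℕ) : ℕ → List (Fin (n+1))
  | 0 => []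
  | m+1 => List.finRange (n+1) ++ rep n m

lemma count_rep (i : Fin (n+1)) (m : ℕ) : (rep n m).count i = m := by
  induction m with
  | zero => rfl
  | succ m ih =>
    rw [rep, List.count_append, ih]
    have : (List.finRange (n+1)).count i = 1 :=
      List.count_eq_one_of_mem (List.nodup_finRange _) (List.mem_finRange i)
    omega

lemma pathH_rep (hC : IsCut n C) (m : ℕ) (z : V n) : pathH n C z (rep n m) = 0 := by
  induction m generalizing z with
  | zero => rfl
  | succ m ih =>
    rw [rep, pathH_append, finRange_sum, add_zero, ih,
      cycle_zero hC z _ finRange_elemCycle]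
    ring

lemma auxmain (hC : IsCut n C) (x : V n) (p q : List (Fin (n+1))) (m : ℕ)
    (hcount : ∀ i, q.count i = p.count i + m) : pathH n C x q = pathH n C x p := by
  have hq_perm : q.Perm (p ++ rep n m) := by
    rw [List.perm_iff_count]
    intro i
    rw [List.count_append, count_rep, hcount]
  rw [pathH_perm hC hq_perm x, pathH_append, pathH_rep hC, add_zero]

end Aux

/-- parallel paths have the same height increment. -/
theorem stmt_2 (n : ℕ) (hn : 1 ≤ n) (C : Set (Arrow n)) (hC : IsCut n C)
    (x y : V n) (p q : List (Fin (n + 1)))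
    (hp : x + (p.map (alphav n)).sum = y) (hq : x + (q.map (alphav n)).sum = y) :
    pathH n C x p = pathH n C x q := by
  have hdisp : (p.map (alphav n)).sum = (q.map (alphav n)).sum :=
    add_left_cancel (hp.trans hq.symm)
  have hd0 : ∑ i : Fin (n+1), ((q.count i : ℤ) - (p.count i : ℤ)) • alphav n i = 0 := by
    simp only [sub_smul, Finset.sum_sub_distrib, ← sum_map_count, hdisp, sub_self]
  have hconst := d_const _ hd0
  set k := (q.count (Fin.last n) : ℤ) - (p.count (Fin.last n) : ℤ) with hk
  rcases le_or_gt 0 k with hkpos | hkneg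
  · have hcount : ∀ i, q.count i = p.count i + k.toNat := by
      intro i; have := hconst i; omega
    exact (auxmain hC x p q k.toNat hcount).symm
  · have hcount : ∀ i, p.count i = q.count i + (-k).toNat := by
      intro i; have := hconst i; omega
    exact auxmain hC x q p (-k).toNat hcount
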